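/- Let A, B ⊆ ℕ with s_A(x) → ∞ and d_{A,B}(x) → ∞. Then max{1, s_A(x − 2·d_{A,B}(x))/d_{A,B}(x)} ≪ s_B(x) ≪ s_A(x + 2·d_{A,B}(x))·d_{A,B}(x). -/

import Mathlib

open Filter

/-- Number of representations of `n` as `a i + a j`, `i ≤ j` (indices into the sequence `a`).
Since `a` is strictly increasing in all uses, `a i ≥ i`, so indices are bounded by `n`. -/
def Rf (a : ℕ → ℕ) (n : ℕ) : ℕ :=
  ((Finset.range (n+1) ×ˢ Finset.range (n+1)).filter
    (fun p => p.1 ≤ p.2 ∧ a p.1 + a p.2 = n)).card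

/-- `s_A(x) = max_{n ≤ x} R_A(n)`. -/
def sf (a : ℕ → ℕ) (x : ℕ) : ℕ := (Finset.range (x+1)).sup (Rf a)

/-- `d_{A,B}(x) = max_{t : a_t ≤ x ∨ b_t ≤ x} |a_t - b_t|`. For strictly increasing
sequences any such index `t` satisfies `t ≤ x`. -/
def df (a b : ℕ → ℕ) (x : ℕ) : ℕ :=
  (Finset.range (x+1)).sup (fun t => if a t ≤ x ∨ b t ≤ x then Nat.dist (a t) (b t) else 0)

/-- Number of representations of `n` as `p + q` with `p ≤ q`, `p, q ∈ A`. -/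
noncomputable def RS (A : Set ℕ) (n : ℕ) : ℕ :=
  Nat.card {p : ℕ × ℕ // p.1 ∈ A ∧ p.2 ∈ A ∧ p.1 ≤ p.2 ∧ p.1 + p.2 = n}

/-- `s_A(x) = max_{n ≤ x} R_A(n)` for a set `A`. -/
noncomputable def sS (A : Set ℕ) (x : ℕ) : ℕ := (Finset.range (x+1)).sup (RS A)

/-
If |a_t - b_t| ≤ D for every index with a_t ≤ n, then replacing each a_i by b_i
moves a representation n = a_i + a_j into a representation of some m ∈ [n - 2D, n + 2D] by B.
Each such m has at most s_B(n + 2D) representations, so R_A(n) ≤ (4D + 1)·s_B(n + 2D).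
Taking D = d_{A,B}(x) in both directions gives both bounds up to the factor 5.
-/

lemma sf_mono (a : ℕ → ℕ) : Monotone (sf a) := fun _ _ h =>
  Finset.sup_mono (Finset.range_subset_range.2 (by omega))

lemma dist_le_df {a b : ℕ → ℕ} (ha : StrictMono a) (hb : StrictMono b) {x t : ℕ}
    (h : a t ≤ x ∨ b t ≤ x) : Nat.dist (a t) (b t) ≤ df a b x := by
  have ht : t < x + 1 := by
    rcases h with h | h
    · exact Nat.lt_succ_of_le ((ha.id_le t).trans h)
    · exact Nat.lt_succ_of_le ((hb.id_le t).trans h)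
  have := Finset.le_sup (f := fun t => if a t ≤ x ∨ b t ≤ x then Nat.dist (a t) (b t) else 0)
    (Finset.mem_range.2 ht)
  simp only [if_pos h] at this
  exact this

lemma Rf_le_of_dist_le {a b : ℕ → ℕ} (hb : StrictMono b) {n D : ℕ}
    (hD : ∀ t, a t ≤ n → Nat.dist (a t) (b t) ≤ D) :
    Rf a n ≤ (4 * D + 1) * sf b (n + 2 * D) := by
  set S := (Finset.range (n + 1) ×ˢ Finset.range (n + 1)).filter
    (fun p => p.1 ≤ p.2 ∧ a p.1 + a p.2 = n) with hS
  have hshift : ∀ p ∈ S, b p.1 + b p.2 ∈ Finset.Icc (n - 2 * D) (n + 2 * D) := by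
    intro p hp
    simp only [hS, Finset.mem_filter] at hp
    have d1 := hD p.1 (by omega)
    have d2 := hD p.2 (by omega)
    simp only [Nat.dist, Finset.mem_Icc] at d1 d2 ⊢
    omega
  have hfiber : ∀ m ∈ Finset.Icc (n - 2 * D) (n + 2 * D),
      (S.filter (fun p => b p.1 + b p.2 = m)).card ≤ sf b (n + 2 * D) := by
    intro m hm
    have hsub : S.filter (fun p => b p.1 + b p.2 = m) ⊆
        (Finset.range (m + 1) ×ˢ Finset.range (m + 1)).filter
          (fun p => p.1 ≤ p.2 ∧ b p.1 + b p.2 = m) := by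
      intro p hp
      simp only [hS, Finset.mem_filter, Finset.mem_product, Finset.mem_range] at hp ⊢
      obtain ⟨⟨-, hpa, -⟩, hpb⟩ := hp
      have e1 : p.1 ≤ b p.1 := hb.id_le _
      have e2 : p.2 ≤ b p.2 := hb.id_le _
      omega
    calc (S.filter (fun p => b p.1 + b p.2 = m)).card
        ≤ Rf b m := Finset.card_le_card hsub
      _ ≤ sf b (n + 2 * D) :=
        Finset.le_sup (Finset.mem_range.2 (by have := (Finset.mem_Icc.1 hm).2; omega))
  calc Rf a n = ∑ m ∈ Finset.Icc (n - 2 * D) (n + 2 * D),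
        (S.filter (fun p => b p.1 + b p.2 = m)).card := Finset.card_eq_sum_card_fiberwise hshift
    _ ≤ (Finset.Icc (n - 2 * D) (n + 2 * D)).card * sf b (n + 2 * D) := by
        simpa using Finset.sum_le_card_nsmul _ _ _ hfiber
    _ ≤ (4 * D + 1) * sf b (n + 2 * D) :=
        Nat.mul_le_mul_right _ (by rw [Nat.card_Icc]; omega)

lemma sf_le_of_dist_le {a b : ℕ → ℕ} (hb : StrictMono b) {y D : ℕ}
    (hD : ∀ t, a t ≤ y → Nat.dist (a t) (b t) ≤ D) :
    sf a y ≤ (4 * D + 1) * sf b (y + 2 * D) := by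
  refine Finset.sup_le fun n hn => ?_
  have hny : n ≤ y := Nat.lt_succ_iff.mp (Finset.mem_range.1 hn)
  calc Rf a n ≤ (4 * D + 1) * sf b (n + 2 * D) :=
        Rf_le_of_dist_le hb fun t ht => hD t (ht.trans hny)
    _ ≤ (4 * D + 1) * sf b (y + 2 * D) := Nat.mul_le_mul_left _ (sf_mono b (by omega))

lemma sf_le_mul_sf_add_df {a b : ℕ → ℕ} (ha : StrictMono a) (hb : StrictMono b) (x : ℕ) :
    sf b x ≤ (4 * df a b x + 1) * sf a (x + 2 * df a b x) :=
  sf_le_of_dist_le ha fun _ ht => Nat.dist_comm _ _ ▸ dist_le_df ha hb (Or.inr ht)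

lemma sf_zero_le_one (a : ℕ → ℕ) : sf a 0 ≤ 1 := by
  refine Finset.sup_le fun n hn => ?_
  obtain rfl : n = 0 := by simpa using hn
  calc Rf a 0 ≤ (Finset.range 1 ×ˢ Finset.range 1).card := Finset.card_filter_le _ _
    _ = 1 := by simp

lemma one_le_sf {b : ℕ → ℕ} {x : ℕ} (hx : 2 * b 0 ≤ x) : 1 ≤ sf b x := by
  have h : 1 ≤ Rf b (2 * b 0) :=
    Finset.card_pos.2 ⟨(0, 0), by simp [Finset.mem_filter]; omega⟩
  exact h.trans (Finset.le_sup (Finset.mem_range.2 (by omega)))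

/-- If `x < 2 d`, truncated subtraction makes the left side `s_A(0) ≤ 1`; hence `1 ≤ s_B(x)`. -/
lemma sf_sub_df_le {a b : ℕ → ℕ} (ha : StrictMono a) (hb : StrictMono b) {x : ℕ}
    (hd : 1 ≤ df a b x) (hsb : 1 ≤ sf b x) :
    sf a (x - 2 * df a b x) ≤ 5 * df a b x * sf b x := by
  by_cases h2 : 2 * df a b x ≤ x
  · calc sf a (x - 2 * df a b x)
        ≤ (4 * df a b x + 1) * sf b (x - 2 * df a b x + 2 * df a b x) :=
          sf_le_of_dist_le hb fun _ ht => dist_le_df ha hb (Or.inl (by omega))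
      _ ≤ 5 * df a b x * sf b x :=
          Nat.mul_le_mul (by omega) (by rw [Nat.sub_add_cancel h2])
  · rw [show x - 2 * df a b x = 0 by omega]
    exact (sf_zero_le_one a).trans (Nat.one_le_iff_ne_zero.2 (by positivity))

theorem stmt19_general (a b : ℕ → ℕ) (ha : StrictMono a) (hb : StrictMono b)
    (hdA : Tendsto (df a b) atTop atTop) :
    (∃ c : ℝ, ∀ᶠ x : ℕ in atTop,
      max 1 ((sf a (x - 2 * df a b x) : ℝ) / (df a b x : ℝ)) ≤ c * (sf b x : ℝ)) ∧
    (∃ C : ℝ, ∀ᶠ x : ℕ in atTop,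
      (sf b x : ℝ) ≤ C * ((sf a (x + 2 * df a b x) : ℝ) * (df a b x : ℝ))) := by
  have hd1 : ∀ᶠ x : ℕ in atTop, 1 ≤ df a b x := hdA.eventually_ge_atTop 1
  refine ⟨⟨5, ?_⟩, ⟨5, ?_⟩⟩
  · filter_upwards [hd1, eventually_ge_atTop (2 * b 0)] with x hd hx
    have hsb : (1 : ℝ) ≤ sf b x := by exact_mod_cast one_le_sf hx
    have hsa : (sf a (x - 2 * df a b x) : ℝ) ≤ 5 * df a b x * sf b x := by
      exact_mod_cast sf_sub_df_le ha hb hd (one_le_sf hx)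
    have hdpos : (0 : ℝ) < df a b x := by exact_mod_cast hd
    exact max_le (by linarith) ((div_le_iff₀ hdpos).2 (by linarith))
  · filter_upwards [hd1] with x hd
    have h : sf b x ≤ 5 * (sf a (x + 2 * df a b x) * df a b x) :=
      (sf_le_mul_sf_add_df ha hb x).trans (by nlinarith)
    exact_mod_cast h

theorem stmt19 (a b : ℕ → ℕ) (ha : StrictMono a) (hb : StrictMono b)
    (hsA : Tendsto (sf a) atTop atTop)
    (hdA : Tendsto (df a b) atTop atTop) :
    (∃ c : ℝ, ∀ᶠ x : ℕ in atTop,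
      max 1 ((sf a (x - 2 * df a b x) : ℝ) / (df a b x : ℝ)) ≤ c * (sf b x : ℝ)) ∧
    (∃ C : ℝ, ∀ᶠ x : ℕ in atTop,
      (sf b x : ℝ) ≤ C * ((sf a (x + 2 * df a b x) : ℝ) * (df a b x : ℝ))) :=
  stmt19_general a b ha hb hdA
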